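/- Let k ≥ 1 and n ≥ 3k − 1 be integers. Let x, y ∈ ℤ² with x ≠ y, with 3k − n < d(x,y) ≤ k, and such that π_n(B_{ℤ²}[x,k] ∩ B_{ℤ²}[y,k]) = π_n(B_{ℤ²}[x,k]) ∩ π_n(B_{ℤ²}[y,k]). Then every facet τ of VR(ℤ²/G_n;k) containing both [x] and [y] is of the form τ = π_n(σ) for some facet σ of VR(ℤ²;k). -/

import Mathlib

/-- The ℓ¹ metric on `ℤ × ℤ`. -/
def dZ2 (x y : ℤ × ℤ) : ℤ := |x.1 - y.1| + |x.2 - y.2|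

/-- `σ` is a simplex of the Vietoris–Rips complex `VR(V; k)` of the metric space `V`
with (integer-valued) distance `d`: a finite nonempty subset of diameter at most `k`. -/
def IsVRSimplex {V : Type*} (d : V → V → ℤ) (k : ℤ) (σ : Finset V) : Prop :=
  σ.Nonempty ∧ ∀ x ∈ σ, ∀ y ∈ σ, d x y ≤ k

/-- `σ` is a facet (maximal simplex) of the Vietoris–Rips complex `VR(V; k)`. -/
def IsVRFacet {V : Type*} (d : V → V → ℤ) (k : ℤ) (σ : Finset V) : Prop :=
  IsVRSimplex d k σ ∧ ∀ τ : Finset V, IsVRSimplex d k τ → σ ⊆ τ → σ = τ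

/-- The circular metric on `ZMod n` (shortest-path metric of the cycle graph `C_n`). -/
def cZdist (n : ℕ) (x y : ZMod n) : ℤ := min ((x - y).val : ℤ) ((y - x).val : ℤ)

/-- The ℓ¹ (quotient) metric on the `n × n` torus grid `T_{n,n} = ℤ²/G_n`,
realized on `ZMod n × ZMod n`. -/
def tdist (n : ℕ) (x y : ZMod n × ZMod n) : ℤ := cZdist n x.1 y.1 + cZdist n x.2 y.2

/-- The quotient map `π_n : ℤ² → ℤ²/G_n`, where `G_n = nℤ × nℤ` and the quotient
is realized as `ZMod n × ZMod n`. -/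
def proj (n : ℕ) (x : ℤ × ℤ) : ZMod n × ZMod n := ((x.1 : ZMod n), (x.2 : ZMod n))

/-- The closed ball `B_{ℤ²}[x, k]` in `ℤ²` with the ℓ¹ metric. -/
def ballZ2 (x : ℤ × ℤ) (k : ℤ) : Set (ℤ × ℤ) := {z | dZ2 x z ≤ k}

/-!
Every vertex of `τ` lies within `k` of both `[x]` and `[y]`, so the ball hypothesis lifts it to a
point of the lens `B[x,k] ∩ B[y,k]`. Two lifts `z, w` cannot be close only around the torus. If
exactly one coordinate wraps (`|zᵢ - wᵢ|` exceeds the circular distance), the two differences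
`|zᵢ - wᵢ|` differ by at least `n - tdist [z] [w] ≥ n - k`, whereas inside the lens they differ
by at most `2k - d(x,y) < n - k`; if both wrap, `d(z,w) ≥ 2n - k > 2k`, which is impossible in
the lens. So the lifts span a simplex of `VR(ℤ²; k)`; any facet `σ` containing it projects onto a
simplex containing `τ` (`π_n` is `1`-Lipschitz), hence onto `τ`.
-/

section CircleMetric

variable {n : ℕ} [NeZero n]

lemma exists_val_intCast_eq_abs (d : ℤ) : ∃ m : ℤ, ((d : ZMod n).val : ℤ) = |d - n * m| :=
  ⟨d / n, by
    rw [ZMod.val_intCast, ← Int.emod_def]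
    exact abs_of_nonneg (Int.emod_nonneg _ (by simp [NeZero.ne])) |>.symm⟩

lemma exists_cZdist_intCast_eq_abs (z w : ℤ) :
    ∃ m : ℤ, cZdist n z w = |z - w - n * m| := by
  obtain ⟨m₁, h₁⟩ := exists_val_intCast_eq_abs (n := n) (z - w)
  obtain ⟨m₂, h₂⟩ := exists_val_intCast_eq_abs (n := n) (w - z)
  have h₂' : ((w - z : ℤ) : ZMod n).val = |z - w - n * -m₂| := by
    rw [h₂, ← abs_neg]; ring_nf
  unfold cZdist
  push_cast at h₁ h₂'
  rcases min_choice (((z : ZMod n) - w).val : ℤ) (((w : ZMod n) - z).val : ℤ) with h | h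
  · exact ⟨m₁, h.trans h₁⟩
  · exact ⟨-m₂, h.trans h₂'⟩

lemma val_intCast_le_self {d : ℤ} (hd : 0 ≤ d) : ((d : ZMod n).val : ℤ) ≤ d := by
  rw [ZMod.val_intCast, Int.emod_def]
  nlinarith [Int.ediv_nonneg hd (Int.natCast_nonneg n)]

lemma cZdist_intCast_le_abs_sub (z w : ℤ) : cZdist n z w ≤ |z - w| := by
  unfold cZdist
  rw [← Int.cast_sub, ← Int.cast_sub]
  rcases le_total w z with h | h
  · rw [abs_of_nonneg (sub_nonneg.mpr h)]
    exact (min_le_left _ _).trans (val_intCast_le_self (sub_nonneg.mpr h))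
  · rw [abs_sub_comm, abs_of_nonneg (sub_nonneg.mpr h)]
    exact (min_le_right _ _).trans (val_intCast_le_self (sub_nonneg.mpr h))

lemma abs_sub_eq_cZdist_or_le (z w : ℤ) :
    |z - w| = cZdist n z w ∨ (n : ℤ) ≤ |z - w| + cZdist n z w := by
  obtain ⟨m, hm⟩ := exists_cZdist_intCast_eq_abs (n := n) z w
  rcases eq_or_ne m 0 with rfl | hm0
  · left; simp [hm]
  · right
    calc (n : ℤ) ≤ |(n : ℤ) * m| := by
          rw [abs_mul, Nat.abs_cast]
          exact le_mul_of_one_le_right (by positivity) (Int.one_le_abs hm0)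
      _ = |(z - w) - (z - w - n * m)| := by ring_nf
      _ ≤ |z - w| + cZdist n z w := hm ▸ abs_sub _ _

lemma exists_intCast_eq_abs_sub_eq_cZdist (x : ℤ) (a : ZMod n) :
    ∃ z : ℤ, (z : ZMod n) = a ∧ |x - z| = cZdist n x a := by
  obtain ⟨w, rfl⟩ := ZMod.intCast_surjective a
  obtain ⟨m, hm⟩ := exists_cZdist_intCast_eq_abs (n := n) x w
  exact ⟨w + n * m, by simp, by rw [hm]; ring_nf⟩

end CircleMetric

section TorusMetric

variable {n : ℕ} [NeZero n]

lemma tdist_proj_le_dZ2 (z w : ℤ × ℤ) : tdist n (proj n z) (proj n w) ≤ dZ2 z w :=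
  add_le_add (cZdist_intCast_le_abs_sub z.1 w.1) (cZdist_intCast_le_abs_sub z.2 w.2)

lemma exists_proj_eq_dZ2_eq_tdist (x : ℤ × ℤ) (t : ZMod n × ZMod n) :
    ∃ z : ℤ × ℤ, proj n z = t ∧ dZ2 x z = tdist n (proj n x) t := by
  obtain ⟨a, b⟩ := t
  obtain ⟨z₁, rfl, h₁⟩ := exists_intCast_eq_abs_sub_eq_cZdist x.1 a
  obtain ⟨z₂, rfl, h₂⟩ := exists_intCast_eq_abs_sub_eq_cZdist x.2 b
  exact ⟨(z₁, z₂), rfl, by simp only [dZ2, tdist, proj, h₁, h₂]⟩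

lemma image_proj_ballZ2 (x : ℤ × ℤ) (k : ℤ) :
    proj n '' ballZ2 x k = {t | tdist n (proj n x) t ≤ k} := by
  ext t
  constructor
  · rintro ⟨z, hz, rfl⟩
    exact (tdist_proj_le_dZ2 x z).trans hz
  · intro ht
    obtain ⟨z, rfl, hz⟩ := exists_proj_eq_dZ2_eq_tdist (n := n) x t
    exact ⟨z, hz.trans_le ht, rfl⟩

end TorusMetric

section Geometry

lemma dZ2_comm (x y : ℤ × ℤ) : dZ2 x y = dZ2 y x := by
  simp only [dZ2, abs_sub_comm]

lemma dZ2_triangle (x y z : ℤ × ℤ) : dZ2 x z ≤ dZ2 x y + dZ2 y z := by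
  simp only [dZ2]
  linarith [abs_sub_le x.1 y.1 z.1, abs_sub_le x.2 y.2 z.2]

variable {k : ℤ} {x y z w : ℤ × ℤ}

lemma abs_sub_add_abs_sub_le_max (p q r s : ℤ) :
    |p - q| + |r - s| ≤ max (|r - p| + |s - q|) (|s - p| + |r - q|) := by
  rw [le_max_iff]
  simp only [Int.abs_eq_natAbs]
  omega

lemma abs_sub_le_abs_sub_add_abs_sub_add_abs_sub (p q r s : ℤ) :
    |r - s| ≤ |r - p| + |p - q| + |s - q| := by
  linarith [abs_sub_le r p s, abs_sub_le p q s, abs_sub_comm q s]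

lemma abs_abs_sub_sub_abs_sub_le (hz : z ∈ ballZ2 x k ∩ ballZ2 y k)
    (hw : w ∈ ballZ2 x k ∩ ballZ2 y k) :
    |(|z.1 - w.1| - |z.2 - w.2|)| ≤ 2 * k - dZ2 x y := by
  obtain ⟨hxz, hyz⟩ := hz
  obtain ⟨hxw, hyw⟩ := hw
  simp only [ballZ2, dZ2, Set.mem_ofPred_eq] at hxz hyz hxw hyw ⊢
  have h₁ := abs_sub_add_abs_sub_le_max z.1 w.1 x.1 y.1
  have h₂ := abs_sub_add_abs_sub_le_max z.2 w.2 x.2 y.2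
  have t₁ := abs_sub_le_abs_sub_add_abs_sub_add_abs_sub z.1 w.1 x.1 y.1
  have t₁' := abs_sub_le_abs_sub_add_abs_sub_add_abs_sub z.1 w.1 y.1 x.1
  have t₂ := abs_sub_le_abs_sub_add_abs_sub_add_abs_sub z.2 w.2 x.2 y.2
  have t₂' := abs_sub_le_abs_sub_add_abs_sub_add_abs_sub z.2 w.2 y.2 x.2
  rw [abs_sub_comm y.1 x.1] at t₁'
  rw [abs_sub_comm y.2 x.2] at t₂'
  rw [abs_le]
  -- four-point inequality in one coordinate, triangle inequality (same pairing) in the other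
  rcases le_max_iff.mp h₁ with h₁ | h₁ <;> rcases le_max_iff.mp h₂ with h₂ | h₂ <;>
    constructor <;> linarith

lemma dZ2_eq_tdist_of_mem_ballZ2_inter {n : ℕ} (hk : 1 ≤ k) (hn : 3 * k - 1 ≤ (n : ℤ))
    (hxy : 3 * k - (n : ℤ) < dZ2 x y) (hz : z ∈ ballZ2 x k ∩ ballZ2 y k)
    (hw : w ∈ ballZ2 x k ∩ ballZ2 y k) (h : tdist n (proj n z) (proj n w) ≤ k) :
    dZ2 z w = tdist n (proj n z) (proj n w) := by
  have : NeZero n := ⟨by omega⟩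
  have hzw : dZ2 z w ≤ 2 * k :=
    calc dZ2 z w ≤ dZ2 x z + dZ2 x w := dZ2_comm z x ▸ dZ2_triangle z x w
      _ ≤ 2 * k := by linarith [show dZ2 x z ≤ k from hz.1, show dZ2 x w ≤ k from hw.1]
  have hcoord := abs_abs_sub_sub_abs_sub_le hz hw
  have hle₁ := cZdist_intCast_le_abs_sub (n := n) z.1 w.1
  have hle₂ := cZdist_intCast_le_abs_sub (n := n) z.2 w.2
  have hwrap₁ := abs_sub_eq_cZdist_or_le (n := n) z.1 w.1
  have hwrap₂ := abs_sub_eq_cZdist_or_le (n := n) z.2 w.2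
  simp only [dZ2, tdist, proj, Int.abs_eq_natAbs] at *
  omega

end Geometry

section VietorisRips

variable {V W : Type*} {k : ℤ}

lemma IsVRSimplex.image [DecidableEq W] {dV : V → V → ℤ} {dW : W → W → ℤ} {f : V → W}
    (hf : ∀ a b, dW (f a) (f b) ≤ dV a b) {σ : Finset V} (hσ : IsVRSimplex dV k σ) :
    IsVRSimplex dW k (σ.image f) := by
  refine ⟨hσ.1.image f, ?_⟩
  simp only [Finset.mem_image, forall_exists_index, and_imp, forall_apply_eq_imp_iff₂]
  exact fun a ha b hb => (hf a b).trans (hσ.2 a ha b hb)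

lemma IsVRSimplex.exists_isVRFacet_superset {d : V → V → ℤ}
    (hfin : ∀ v, {w | d v w ≤ k}.Finite) {σ₀ : Finset V} (hσ₀ : IsVRSimplex d k σ₀) :
    ∃ σ, IsVRFacet d k σ ∧ σ₀ ⊆ σ := by
  obtain ⟨v, hv⟩ := hσ₀.1
  set S := {σ : Finset V | IsVRSimplex d k σ ∧ σ₀ ⊆ σ}
  have hS : S.Finite := by
    refine (hfin v).toFinset.powerset.finite_toSet.subset fun σ hσ => ?_
    simp only [Finset.coe_powerset, Set.mem_preimage, Set.mem_powerset_iff, Finset.coe_subset]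
    intro w hw
    simpa using hσ.1.2 v (hσ.2 hv) w hw
  obtain ⟨σ, hσ₀σ, hmax⟩ := hS.exists_le_maximal ⟨hσ₀, subset_rfl⟩
  refine ⟨σ, ⟨hmax.prop.1, fun τ hτ hστ => ?_⟩, hσ₀σ⟩
  exact hmax.eq_of_le ⟨hτ, hmax.prop.2.trans hστ⟩ hστ

end VietorisRips

lemma ballZ2_finite (x : ℤ × ℤ) (k : ℤ) : (ballZ2 x k).Finite := by
  refine (Set.finite_Icc (x.1 - k, x.2 - k) (x.1 + k, x.2 + k)).subset fun z hz => ?_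
  simp only [ballZ2, dZ2, Set.mem_ofPred_eq, Int.abs_eq_natAbs] at hz
  simp only [Set.mem_Icc, Prod.le_def]
  omega

theorem stmt6_general (k : ℤ) (n : ℕ) (hk : 1 ≤ k) (hn : 3 * k - 1 ≤ (n : ℤ))
    (x y : ℤ × ℤ)
    (hd1 : 3 * k - (n : ℤ) < dZ2 x y)
    (hball : proj n '' (ballZ2 x k ∩ ballZ2 y k)
      = proj n '' ballZ2 x k ∩ proj n '' ballZ2 y k)
    (τ : Finset (ZMod n × ZMod n)) (hτ : IsVRFacet (tdist n) k τ)
    (hxτ : proj n x ∈ τ) (hyτ : proj n y ∈ τ) :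
    ∃ σ : Finset (ℤ × ℤ), IsVRFacet dZ2 k σ ∧ τ = σ.image (proj n) := by
  classical
  have : NeZero n := ⟨by omega⟩
  have hτ_lifts : ↑τ ⊆ proj n '' (ballZ2 x k ∩ ballZ2 y k) := by
    intro t ht
    rw [hball, image_proj_ballZ2, image_proj_ballZ2]
    exact ⟨hτ.1.2 _ hxτ _ ht, hτ.1.2 _ hyτ _ ht⟩
  obtain ⟨σ₀, hσ₀, rfl⟩ := Finset.subset_set_image_iff.mp hτ_lifts
  have hσ₀_simplex : IsVRSimplex dZ2 k σ₀ := by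
    refine ⟨Finset.image_nonempty.mp hτ.1.1, fun a ha b hb => ?_⟩
    have hab := hτ.1.2 _ (Finset.mem_image_of_mem _ ha) _ (Finset.mem_image_of_mem _ hb)
    exact (dZ2_eq_tdist_of_mem_ballZ2_inter hk hn hd1 (hσ₀ ha) (hσ₀ hb) hab).trans_le hab
  obtain ⟨σ, hσ, hσ₀σ⟩ := hσ₀_simplex.exists_isVRFacet_superset (ballZ2_finite · k)
  exact ⟨σ, hσ, hτ.2 _ (hσ.1.image tdist_proj_le_dZ2) (Finset.image_subset_image hσ₀σ)⟩

theorem stmt6 (k : ℤ) (n : ℕ) (hk : 1 ≤ k) (hn : 3 * k - 1 ≤ (n : ℤ))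
    (x y : ℤ × ℤ) (hxy : x ≠ y)
    (hd1 : 3 * k - (n : ℤ) < dZ2 x y) (hd2 : dZ2 x y ≤ k)
    (hball : proj n '' (ballZ2 x k ∩ ballZ2 y k)
      = proj n '' ballZ2 x k ∩ proj n '' ballZ2 y k)
    (τ : Finset (ZMod n × ZMod n)) (hτ : IsVRFacet (tdist n) k τ)
    (hxτ : proj n x ∈ τ) (hyτ : proj n y ∈ τ) :
    ∃ σ : Finset (ℤ × ℤ), IsVRFacet dZ2 k σ ∧ τ = σ.image (proj n) :=
  stmt6_general k n hk hn x y hd1 hball τ hτ hxτ hyτ
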